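/- arXiv:1304.0979 — 2 statements merged into one kernel-verified Lean document; each statement's English description precedes it below -/
import Mathlib

section
/- Let κ be a non-measurable cardinal. Then 2^κ is non-measurable. -/
universe u

/-- An Ulam measure on a set `I`: a countably additive, `{0,1}`-valued measure on the
power set of `I` giving `I` measure `1` and every singleton measure `0`. -/
def IsUlamMeasure {I : Type u} (μ : Set I → ℝ) : Prop :=
  (∀ A : Set I, μ A = 0 ∨ μ A = 1) ∧ μ Set.univ = 1 ∧ (∀ x : I, μ {x} = 0) ∧
    ∀ A : ℕ → Set I, Pairwise (Function.onFun Disjoint A) →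
      μ (⋃ n, A n) = ∑' n : ℕ, μ (A n)

/-- A cardinal is measurable (in the sense of Ulam) if it is uncountable and some set of
that cardinality carries an Ulam measure. -/
def IsMeasurableCard (κ : Cardinal.{u}) : Prop :=
  Cardinal.aleph0 < κ ∧
    ∃ (I : Type u) (μ : Set I → ℝ), Cardinal.mk I = κ ∧ IsUlamMeasure μ

namespace UlamAux

variable {I : Type u} {μ : Set I → ℝ}

lemma nonneg (h : IsUlamMeasure μ) (A : Set I) : 0 ≤ μ A := by
  rcases h.1 A with h'|h' <;> simp [h']

lemma le_one (h : IsUlamMeasure μ) (A : Set I) : μ A ≤ 1 := by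
  rcases h.1 A with h'|h' <;> simp [h']

lemma empty (h : IsUlamMeasure μ) : μ ∅ = 0 := by
  rcases h.1 (∅ : Set I) with h'|h'
  · exact h'
  · exfalso
    have hadd := h.2.2.2 (fun _ => (∅ : Set I)) (by intro i j hij; simp)
    rw [Set.iUnion_empty] at hadd
    replace hadd : (1:ℝ) = ∑' (_ : ℕ), (1:ℝ) := by simp only [h'] at hadd; exact hadd
    have hns : ¬ Summable (fun _ : ℕ => (1:ℝ)) := by
      intro hs
      have := hs.tendsto_atTop_zero
      have h2 := tendsto_nhds_unique this tendsto_const_nhds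
      norm_num at h2
    rw [tsum_eq_zero_of_not_summable hns] at hadd
    norm_num at hadd

lemma pair_add (h : IsUlamMeasure μ) {A B : Set I} (hd : Disjoint A B) :
    μ (A ∪ B) = μ A + μ B := by
  classical
  set C : ℕ → Set I := fun n => if n = 0 then A else if n = 1 then B else ∅ with hC
  have hdis : Pairwise (Function.onFun Disjoint C) := by
    intro i j hij
    unfold Function.onFun
    rcases Nat.eq_zero_or_pos i with hi|hi <;> rcases Nat.eq_zero_or_pos j with hj|hj
    · omega
    · subst hi
      by_cases hj1 : j = 1
      · simpa [hC, hj1] using hd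
      · simp [hC, hj1, Nat.pos_iff_ne_zero.mp hj]
    · subst hj
      by_cases hi1 : i = 1
      · simpa [hC, hi1] using hd.symm
      · simp [hC, hi1, Nat.pos_iff_ne_zero.mp hi]
    · by_cases hi1 : i = 1 <;> by_cases hj1 : j = 1
      · omega
      · simp [hC, hi1, hj1, Nat.pos_iff_ne_zero.mp hj]
      · simp [hC, hi1, Nat.pos_iff_ne_zero.mp hi]
      · simp [hC, hi1, Nat.pos_iff_ne_zero.mp hi]
  have hadd := h.2.2.2 C hdis
  have hU : (⋃ n, C n) = A ∪ B := by
    apply Set.Subset.antisymm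
    · intro x hx
      obtain ⟨n, hn⟩ := Set.mem_iUnion.mp hx
      by_cases h0 : n = 0
      · exact Or.inl (by simpa [hC, h0] using hn)
      by_cases h1 : n = 1
      · exact Or.inr (by simpa [hC, h1] using hn)
      · simp [hC, h0, h1] at hn
    · intro x hx
      rcases hx with hx|hx
      · exact Set.mem_iUnion.mpr ⟨0, by simp [hC, hx]⟩
      · exact Set.mem_iUnion.mpr ⟨1, by simp [hC, hx]⟩
  have hts : ∑' n, μ (C n) = ∑ b ∈ ({0, 1} : Finset ℕ), μ (C b) := by
    apply tsum_eq_sum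
    intro b hb
    simp only [Finset.mem_insert, Finset.mem_singleton] at hb
    push_neg at hb
    simp [hC, hb.1, hb.2, empty h]
  rw [hU] at hadd
  rw [hadd, hts]
  norm_num [hC]

lemma mono (h : IsUlamMeasure μ) {A B : Set I} (hAB : A ⊆ B) : μ A ≤ μ B := by
  have hd : Disjoint A (B \ A) := Set.disjoint_sdiff_right.mono_left le_rfl
  have : A ∪ (B \ A) = B := Set.union_diff_cancel hAB
  have := pair_add h hd
  rw [Set.union_diff_cancel hAB] at this
  rw [this]
  have := nonneg h (B \ A)
  linarith

lemma compl_eq (h : IsUlamMeasure μ) (A : Set I) : μ Aᶜ = 1 - μ A := by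
  have hd : Disjoint A Aᶜ := disjoint_compl_right
  have := pair_add h hd
  rw [Set.union_compl_self] at this
  rw [h.2.1] at this
  linarith

lemma subsingleton_zero (h : IsUlamMeasure μ) {A : Set I} (hA : A.Subsingleton) : μ A = 0 := by
  rcases A.eq_empty_or_nonempty with rfl|⟨a, ha⟩
  · exact empty h
  · have hsub : A ⊆ {a} := fun x hx => hA hx ha
    have := mono h hsub
    rw [h.2.2.1 a] at this
    linarith [nonneg h A]

lemma transport {J : Type u} {i : I → J} (hi : Function.Injective i)
    (h : IsUlamMeasure μ) : IsUlamMeasure (fun B => μ (i ⁻¹' B)) := by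
  refine ⟨fun A => h.1 _, by simpa using h.2.1, fun y => ?_, fun A hA => ?_⟩
  · apply subsingleton_zero h
    intro a ha b hb
    exact hi (ha.trans hb.symm)
  · simp only [Set.preimage_iUnion]
    exact h.2.2.2 _ (fun m n hmn => (hA hmn).preimage i)

lemma uncountable (h : IsUlamMeasure μ) : Cardinal.aleph0 < Cardinal.mk I := by
  by_contra hle
  push_neg at hle
  have : Countable I := Cardinal.mk_le_aleph0_iff.mp hle
  have hne : Nonempty I := by
    by_contra hne
    rw [not_nonempty_iff] at hne
    have : (Set.univ : Set I) = ∅ := Set.univ_eq_empty_iff.mpr hne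
    have h1 := h.2.1
    rw [this, empty h] at h1
    norm_num at h1
  obtain ⟨f, hf⟩ := exists_surjective_nat I
  set A : ℕ → Set I := fun n => {x | f n = x ∧ ∀ k < n, f k ≠ x} with hAdef
  have hdis : Pairwise (Function.onFun Disjoint A) := by
    intro m n hmn
    unfold Function.onFun
    rw [Set.disjoint_left]
    rintro x ⟨hm1, hm2⟩ ⟨hn1, hn2⟩
    rcases Nat.lt_or_ge m n with hlt|hge
    · exact hn2 m hlt hm1
    · exact hm2 n (lt_of_le_of_ne hge (Ne.symm hmn)) hn1
  have hU : (⋃ n, A n) = Set.univ := by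
    apply Set.eq_univ_of_forall
    classical
    intro x
    have hex : ∃ n, f n = x := hf x
    refine Set.mem_iUnion.mpr ⟨Nat.find hex, Nat.find_spec hex, fun k hk => Nat.find_min hex hk⟩
  have hzero : ∀ n, μ (A n) = 0 := by
    intro n
    apply subsingleton_zero h
    rintro a ⟨ha, -⟩ b ⟨hb, -⟩
    exact ha.symm.trans hb
  have hadd := h.2.2.2 A hdis
  rw [hU, h.2.1] at hadd
  simp only [hzero, tsum_zero] at hadd
  norm_num at hadd

lemma complete (h : IsUlamMeasure μ)
    (hmin : ∀ (T : Type u) (ν : Set T → ℝ), IsUlamMeasure ν → Cardinal.mk I ≤ Cardinal.mk T)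
    (T : Type u) (hT : Cardinal.mk T < Cardinal.mk I)
    (B : T → Set I) (hB : ∀ t, μ (B t) = 1) : μ (⋂ t, B t) = 1 := by
  by_contra hne
  have h0 : μ (⋂ t, B t) = 0 := (h.1 _).resolve_right hne
  classical
  set r : T → T → Prop := WellOrderingRel with hr
  haveI : IsWellOrder T r := WellOrderingRel.isWellOrder
  have wf : WellFounded r := IsWellFounded.wf
  set E : T → Set I := fun t => {x | (∀ s, r s t → x ∈ B s) ∧ x ∉ B t} with hE
  have hEdis : ∀ s t, s ≠ t → Disjoint (E s) (E t) := by
    have key : ∀ s t, r s t → Disjoint (E s) (E t) := by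
      intro s t hst
      rw [Set.disjoint_left]
      rintro x ⟨-, hx2⟩ ⟨hx3, -⟩
      exact hx2 (hx3 s hst)
    intro s t hst
    rcases trichotomous_of r s t with h'|h'|h'
    · exact key s t h'
    · exact absurd h' hst
    · exact (key t s h').symm
  have hEB : ∀ t, E t ⊆ (B t)ᶜ := fun t x hx => hx.2
  have hEzero : ∀ t, μ (E t) = 0 := by
    intro t
    have := mono h (hEB t)
    rw [compl_eq h, hB t] at this
    have := nonneg h (E t)
    linarith [mono h (hEB t), compl_eq h (B t)]
  have hEunion : (⋃ t, E t) = (⋂ t, B t)ᶜ := by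
    apply Set.Subset.antisymm
    · intro x hx
      obtain ⟨t, ht⟩ := Set.mem_iUnion.mp hx
      exact fun hmem => ht.2 (Set.mem_iInter.mp hmem t)
    · intro x hx
      have hs : {t | x ∉ B t}.Nonempty := by
        by_contra hemp
        rw [Set.not_nonempty_iff_eq_empty] at hemp
        exact hx (Set.mem_iInter.mpr fun t =>
          not_not.mp (Set.eq_empty_iff_forall_notMem.mp hemp t))
      refine Set.mem_iUnion.mpr ⟨wf.min _ hs, fun s hst => ?_, wf.min_mem _ hs⟩
      by_contra hns
      exact wf.not_lt_min _ hns hst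
  set ν : Set T → ℝ := fun D => μ (⋃ t ∈ D, E t) with hν
  have hνU : IsUlamMeasure ν := by
    refine ⟨fun D => h.1 _, ?_, fun t => ?_, fun D hD => ?_⟩
    · show μ _ = 1
      rw [Set.biUnion_univ, hEunion, compl_eq h, h0]
      norm_num
    · show μ _ = 0
      rw [Set.biUnion_singleton]
      exact hEzero t
    · show μ _ = ∑' n, μ _
      rw [Set.biUnion_iUnion]
      apply h.2.2.2
      intro m n hmn
      unfold Function.onFun
      rw [Set.disjoint_left]
      rintro x hxm hxn
      obtain ⟨t, htD, hxt⟩ := Set.mem_iUnion₂.mp hxm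
      obtain ⟨t', htD', hxt'⟩ := Set.mem_iUnion₂.mp hxn
      rcases eq_or_ne t t' with rfl|hne'
      · exact Set.disjoint_left.mp (hD hmn) htD htD'
      · exact Set.disjoint_left.mp (hEdis t t' hne') hxt hxt'
  exact absurd (hmin T ν hνU) (not_le.mpr hT)
end UlamAux

open UlamAux in
/-- Ulam: if `κ` is non-measurable then `2 ^ κ` is non-measurable. -/
theorem two_pow_nonmeasurable (κ : Cardinal.{u}) (hκ : ¬ IsMeasurableCard κ) :
    ¬ IsMeasurableCard (2 ^ κ) := by
  intro h2
  obtain ⟨-, I0, μ0, hmk0, hμ0⟩ := h2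
  classical
  set S : Set Cardinal.{u} :=
    {c | ∃ (J : Type u) (ν : Set J → ℝ), Cardinal.mk J = c ∧ IsUlamMeasure ν} with hSdef
  have hS : S.Nonempty := ⟨2 ^ κ, I0, μ0, hmk0, hμ0⟩
  obtain ⟨I, μ, hmkI, hμ⟩ : sInf S ∈ S := csInf_mem hS
  have hmin : ∀ (T : Type u) (ν : Set T → ℝ), IsUlamMeasure ν →
      Cardinal.mk I ≤ Cardinal.mk T := by
    intro T ν hν
    rw [hmkI]
    exact csInf_le' ⟨T, ν, rfl, hν⟩
  have hlam_le : sInf S ≤ 2 ^ κ := csInf_le' ⟨I0, μ0, hmk0, hμ0⟩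
  -- the minimal measurable cardinal `sInf S = mk I` is at most `κ`
  have hlamκ : sInf S ≤ κ := by
    by_contra hgt
    push_neg at hgt
    have hle : Cardinal.mk I ≤ Cardinal.mk (Set κ.out) := by
      rw [hmkI, Cardinal.mk_set, Cardinal.mk_out]; exact hlam_le
    obtain ⟨i⟩ := (Cardinal.le_def _ _).mp hle
    set μ' : Set (Set κ.out) → ℝ := fun B => μ (i ⁻¹' B) with hμ'def
    have hμ' : IsUlamMeasure μ' := transport i.injective hμ
    set g : Set κ.out := {α | μ' {f : Set κ.out | α ∈ f} = 1} with hg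
    have hBα : ∀ α : κ.out, μ' {f : Set κ.out | α ∈ f ↔ α ∈ g} = 1 := by
      intro α
      by_cases hα : α ∈ g
      · have hset : {f : Set κ.out | α ∈ f ↔ α ∈ g} = {f : Set κ.out | α ∈ f} := by
          ext f; simp [hα]
        rw [hset]; exact hα
      · have h0 : μ' {f : Set κ.out | α ∈ f} = 0 := (hμ'.1 _).resolve_right hα
        have hset : {f : Set κ.out | α ∈ f ↔ α ∈ g} = {f : Set κ.out | α ∈ f}ᶜ := by
          ext f; simp [hα]
        rw [hset, compl_eq hμ', h0]; norm_num
    have hInter : (⋂ α : κ.out, {f : Set κ.out | α ∈ f ↔ α ∈ g}) = {g} := by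
      ext f
      simp only [Set.mem_iInter, Set.mem_setOf_eq, Set.mem_singleton_iff]
      constructor
      · intro hf; ext α; exact hf α
      · rintro rfl α; rfl
    have hcard : Cardinal.mk κ.out < Cardinal.mk I := by
      rw [Cardinal.mk_out, hmkI]; exact hgt
    have hcomp := complete hμ hmin κ.out hcard
      (fun α => i ⁻¹' {f : Set κ.out | α ∈ f ↔ α ∈ g}) (fun α => hBα α)
    rw [← Set.preimage_iInter, hInter] at hcomp
    have hzero : μ (i ⁻¹' {g}) = 0 :=
      subsingleton_zero hμ (fun a ha b hb => i.injective (ha.trans hb.symm))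
    rw [hzero] at hcomp
    norm_num at hcomp
  have hℵ0 : Cardinal.aleph0 < κ :=
    lt_of_lt_of_le (hmkI ▸ uncountable hμ) hlamκ
  have hle : Cardinal.mk I ≤ Cardinal.mk κ.out := by
    rw [Cardinal.mk_out, hmkI]; exact hlamκ
  obtain ⟨j⟩ := (Cardinal.le_def _ _).mp hle
  exact hκ ⟨hℵ0, κ.out, fun A => μ (j ⁻¹' A), Cardinal.mk_out κ, transport j.injective hμ⟩
end

section
/- Let I be a set, and let 𝓘 be a family of subsets of I satisfying: (a) 𝓘 contains all finite subsets of I; (b) 𝓘 is closed under taking subsets and finite unions; (c) for every family (J_n)_{n∈ℕ} of pairwise disjoint subsets of I there exists n₀ ∈ ℕ with ⋃_{n>n₀} J_n ∈ 𝓘; and (d) I ∉ 𝓘. Then |I| is measurable, i.e., there exists a countably additive {0,1}-valued measure μ on the power set of I with μ(I)=1 and μ({x})=0 for all x ∈ I. -/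
universe u

/-- Auxiliary: 𝓘 is closed under countable unions. -/
theorem aux_sigma (I : Type u) (𝓘 : Set (Set I))
    (hb₁ : ∀ A B : Set I, A ⊆ B → B ∈ 𝓘 → A ∈ 𝓘)
    (hb₂ : ∀ A B : Set I, A ∈ 𝓘 → B ∈ 𝓘 → A ∪ B ∈ 𝓘)
    (hc : ∀ J : ℕ → Set I, Pairwise (Function.onFun Disjoint J) →
      ∃ n₀ : ℕ, (⋃ n, ⋃ (_ : n₀ < n), J n) ∈ 𝓘)
    (B : ℕ → Set I) (hB : ∀ n, B n ∈ 𝓘) : (⋃ n, B n) ∈ 𝓘 := by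
  obtain ⟨n₀, hn₀⟩ := hc (disjointed B) (disjoint_disjointed B)
  have hhead : ∀ m : ℕ, (⋃ n ∈ Finset.range m, B n) ∈ 𝓘 := by
    intro m
    induction m with
    | zero => simpa using hb₁ ∅ (B 0) (Set.empty_subset _) (hB 0)
    | succ k ih =>
        have : (⋃ n ∈ Finset.range (k + 1), B n)
            = (⋃ n ∈ Finset.range k, B n) ∪ B k := by
          ext x
          simp only [Set.mem_iUnion, Finset.mem_range, Set.mem_union]
          constructor
          · rintro ⟨n, hn, hx⟩
            rcases lt_or_eq_of_le (Nat.lt_succ_iff.mp hn) with h | h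
            · exact Or.inl ⟨n, h, hx⟩
            · exact Or.inr (h ▸ hx)
          · rintro (⟨n, hn, hx⟩ | hx)
            · exact ⟨n, Nat.lt_succ_of_lt hn, hx⟩
            · exact ⟨k, Nat.lt_succ_self k, hx⟩
        rw [this]
        exact hb₂ _ _ ih (hB k)
  apply hb₁ _ ((⋃ n ∈ Finset.range (n₀ + 1), B n) ∪ (⋃ n, ⋃ (_ : n₀ < n), disjointed B n))
  · intro x hx
    rw [← iUnion_disjointed] at hx
    obtain ⟨n, hn⟩ := Set.mem_iUnion.mp hx
    by_cases h : n₀ < n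
    · exact Or.inr (Set.mem_iUnion.mpr ⟨n, Set.mem_iUnion.mpr ⟨h, hn⟩⟩)
    · refine Or.inl (Set.mem_iUnion.mpr ⟨n, Set.mem_iUnion.mpr ⟨?_, disjointed_le B n hn⟩⟩)
      simpa using Nat.lt_succ_of_le (not_lt.mp h)
  · exact hb₂ _ _ (hhead (n₀ + 1)) hn₀

/-- Auxiliary: there is an "atom" modulo 𝓘. -/
theorem aux_atom (I : Type u) (𝓘 : Set (Set I))
    (hb₁ : ∀ A B : Set I, A ⊆ B → B ∈ 𝓘 → A ∈ 𝓘)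
    (hc : ∀ J : ℕ → Set I, Pairwise (Function.onFun Disjoint J) →
      ∃ n₀ : ℕ, (⋃ n, ⋃ (_ : n₀ < n), J n) ∈ 𝓘)
    (hd : Set.univ ∉ 𝓘) :
    ∃ S : Set I, S ∉ 𝓘 ∧ ∀ T : Set I, S ∩ T ∈ 𝓘 ∨ S \ T ∈ 𝓘 := by
  by_contra h
  push_neg at h
  have h' : ∀ S : Set I, ∃ T, S ∉ 𝓘 → S ∩ T ∉ 𝓘 ∧ S \ T ∉ 𝓘 := by
    intro S
    by_cases hS : S ∈ 𝓘
    · exact ⟨∅, fun c => absurd hS c⟩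
    · obtain ⟨T, hT1, hT2⟩ := h S hS
      exact ⟨T, fun _ => ⟨hT1, hT2⟩⟩
  choose f hf using h'
  -- build a decreasing sequence of positive sets
  let S : ℕ → Set I := fun n => Nat.rec Set.univ (fun _ s => s \ f s) n
  have hS0 : S 0 = Set.univ := rfl
  have hSsucc : ∀ n, S (n + 1) = S n \ f (S n) := fun n => rfl
  have hSnot : ∀ n, S n ∉ 𝓘 := by
    intro n
    induction n with
    | zero => exact hd
    | succ k ih => exact (hf (S k) ih).2
  let A : ℕ → Set I := fun n => S n ∩ f (S n)
  have hAnot : ∀ n, A n ∉ 𝓘 := fun n => (hf (S n) (hSnot n)).1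
  have hmono : ∀ m n : ℕ, m ≤ n → S n ⊆ S m := by
    intro m n hmn
    induction n with
    | zero => simpa using (Nat.le_zero.mp hmn) ▸ subset_rfl
    | succ k ih =>
        rcases Nat.le_succ_iff.mp hmn with h1 | h1
        · exact (Set.diff_subset).trans (ih h1)
        · exact h1 ▸ subset_rfl
  have hdisj : ∀ m n : ℕ, m < n → Disjoint (A m) (A n) := by
    intro m n hmn
    rw [Set.disjoint_left]
    intro x hxm hxn
    have hx1 : x ∈ S (m + 1) := hmono (m + 1) n hmn (hxn.1)
    rw [hSsucc m] at hx1
    exact hx1.2 hxm.2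
  have hpw : Pairwise (Function.onFun Disjoint A) := by
    intro m n hmn
    rcases lt_or_gt_of_ne hmn with h1 | h1
    · exact hdisj m n h1
    · exact (hdisj n m h1).symm
  obtain ⟨n₀, hn₀⟩ := hc A hpw
  refine hAnot (n₀ + 1) (hb₁ _ _ ?_ hn₀)
  intro x hx
  exact Set.mem_iUnion.mpr ⟨n₀ + 1, Set.mem_iUnion.mpr ⟨Nat.lt_succ_self n₀, hx⟩⟩

/-- if a family `𝓘` of subsets of `I` contains all finite subsets, is
closed under subsets and finite unions, satisfies the countable-tail condition for
pairwise disjoint families, and does not contain `I` itself, then `|I|` is measurable. -/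
theorem measurable_of_ideal (I : Type u) (𝓘 : Set (Set I))
    (ha : ∀ A : Set I, A.Finite → A ∈ 𝓘)
    (hb₁ : ∀ A B : Set I, A ⊆ B → B ∈ 𝓘 → A ∈ 𝓘)
    (hb₂ : ∀ A B : Set I, A ∈ 𝓘 → B ∈ 𝓘 → A ∪ B ∈ 𝓘)
    (hc : ∀ J : ℕ → Set I, Pairwise (Function.onFun Disjoint J) →
      ∃ n₀ : ℕ, (⋃ n, ⋃ (_ : n₀ < n), J n) ∈ 𝓘)
    (hd : Set.univ ∉ 𝓘) :
    IsMeasurableCard (Cardinal.mk I) := by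
  have hσ := aux_sigma I 𝓘 hb₁ hb₂ hc
  obtain ⟨S, hSnot, hSatom⟩ := aux_atom I 𝓘 hb₁ hc hd
  classical
  -- uncountability
  have huncount : Cardinal.aleph0 < Cardinal.mk I := by
    by_contra hle
    have hcount : Countable I := Cardinal.mk_le_aleph0_iff.mp (not_lt.mp hle)
    rcases isEmpty_or_nonempty I with hemp | hne
    · exact hd (ha _ (Set.finite_univ))
    · obtain ⟨g, hg⟩ := exists_surjective_nat I
      have : (Set.univ : Set I) = ⋃ n, {g n} := by
        ext x
        simp only [Set.mem_univ, Set.mem_iUnion, Set.mem_singleton_iff, true_iff]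
        obtain ⟨n, hn⟩ := hg x
        exact ⟨n, hn.symm⟩
      exact hd (this ▸ hσ (fun n => {g n}) (fun n => ha _ (Set.finite_singleton _)))
  refine ⟨huncount, I, fun A => if S ∩ A ∈ 𝓘 then 0 else 1, rfl, ?_, ?_, ?_, ?_⟩
  · intro A
    by_cases h : S ∩ A ∈ 𝓘 <;> simp [h]
  · have : S ∩ Set.univ = S := Set.inter_univ S
    simp [this, hSnot]
  · intro x
    have : S ∩ {x} ∈ 𝓘 := ha _ ((Set.finite_singleton x).inter_of_right S)
    simp [this]
  · intro A hA
    by_cases h1 : ∀ n, S ∩ A n ∈ 𝓘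
    · have hU : S ∩ ⋃ n, A n ∈ 𝓘 := by
        have : S ∩ ⋃ n, A n = ⋃ n, S ∩ A n := Set.inter_iUnion S A
        exact this ▸ hσ _ h1
      simp only [hU, if_true, h1, if_pos]
      exact tsum_zero.symm
    · push_neg at h1
      obtain ⟨n, hn⟩ := h1
      have hkey : ∀ m, m ≠ n → S ∩ A m ∈ 𝓘 := by
        intro m hm
        rcases hSatom (A n) with h | h
        · exact absurd h hn
        · refine hb₁ _ _ ?_ h
          intro x hx
          exact ⟨hx.1, fun hxn => Set.disjoint_left.mp (hA hm) hx.2 hxn⟩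
      have hU : S ∩ ⋃ k, A k ∉ 𝓘 := by
        intro hmem
        exact hn (hb₁ _ _ (Set.inter_subset_inter_right S (Set.subset_iUnion A n)) hmem)
      have hsum : (∑' k : ℕ, (if S ∩ A k ∈ 𝓘 then (0:ℝ) else 1)) = 1 := by
        rw [tsum_eq_single n]
        · simp [hn]
        · intro m hm; simp [hkey m hm]
      simp only [hU, if_neg, hsum]
      simp [hU]
end
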